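/- For any real number α and any integers t ≥ 2 and n ≥ 4, the general Randić index of the Sierpiński graph S(C_n,t) built from the cycle C_n satisfies R_α(S(C_n,t)) = 4^α·n^{t−1}(n−4) + 4·6^α·(n^{t−1} − n·ψ(t−2)) + 9^α·n·(ψ(t−1) + 4ψ(t−2)). -/

import Mathlib

open Finset

/-- The generalized Sierpiński graph `S(G,t)` on words of length `t` over the vertex set. -/
def sierpinskiGraph {V : Type*} (G : SimpleGraph V) (t : ℕ) :
    SimpleGraph (Fin t → V) where
  Adj u v := ∃ i : Fin t, (∀ j, j < i → u j = v j) ∧ u i ≠ v i ∧ G.Adj (u i) (v i) ∧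
      ∀ j, i < j → u j = v i ∧ v j = u i
  symm := by
    constructor
    rintro u v ⟨i, h1, h2, h3, h4⟩
    exact ⟨i, fun j hj => (h1 j hj).symm, fun h => h2 h.symm, h3.symm,
      fun j hj => ⟨(h4 j hj).2, (h4 j hj).1⟩⟩
  loopless := by
    constructor
    rintro u ⟨i, _, h2, _⟩
    exact h2 rfl

instance {V : Type*} [Fintype V] [DecidableEq V] (G : SimpleGraph V) [DecidableRel G.Adj]
    (t : ℕ) : DecidableRel (sierpinskiGraph G t).Adj := fun u v =>
  inferInstanceAs (Decidable (∃ i : Fin t, (∀ j, j < i → u j = v j) ∧ u i ≠ v i ∧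
    G.Adj (u i) (v i) ∧ ∀ j, i < j → u j = v i ∧ v j = u i))

/-- The general Randić index `R_α`. -/
noncomputable def randic {V : Type*} [Fintype V] (G : SimpleGraph V) (α : ℝ) : ℝ := by
  classical
  exact ∑ e ∈ G.edgeFinset,
    Sym2.lift ⟨fun u v => ((G.degree u : ℝ) * (G.degree v : ℝ)) ^ α,
      fun u v => by dsimp only; rw [mul_comm]⟩ e

/-- `τ(x,y)`: the number of triangles containing the adjacent vertices `x` and `y`. -/
def tau {V : Type*} [Fintype V] [DecidableEq V] (G : SimpleGraph V) [DecidableRel G.Adj]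
    (x y : V) : ℕ := (G.neighborFinset x ∩ G.neighborFinset y).card

lemma tau_comm {V : Type*} [Fintype V] [DecidableEq V] (G : SimpleGraph V) [DecidableRel G.Adj]
    (x y : V) : tau G x y = tau G y x := by
  simp [tau, Finset.inter_comm]

/-- `ψ(t) = 1 + n + ⋯ + n^{t-1}`. -/
def psi (n t : ℕ) : ℕ := ∑ i ∈ Finset.range t, n ^ i

/-- `τ(G)`: the number of triangles of `G`. -/
noncomputable def triangleCount {V : Type*} [Fintype V] (G : SimpleGraph V) : ℕ := by
  classical exact (G.cliqueFinset 3).card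

/-!
A word `u = p a b ⋯ b` of `S(G, t)` with `G.Adj a b` (a "bridge end") has, besides the
`deg_G b` neighbours obtained by changing its last letter, exactly one neighbour `p b a ⋯ a` in
another copy of `S(G, t - 1)`; every other word has only the former. Hence in `S(C_n, t)` the
degrees are `2` and `3`, in the copy `w C_n` the vertices of degree `3` are `w_last ± 1` and, when
`w` itself is a bridge end, `w_last`, and bridge ends of length `t` number `2 n ψ(t - 1)`.
Summing `(d u * d v) ^ α` over the darts of `S(C_n, t)` copy by copy gives `2 R_α`.
-/

open SimpleGraph

namespace SimpleGraph

variable {V : Type*} [Fintype V] [DecidableEq V] (G : SimpleGraph V) [DecidableRel G.Adj]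

theorem sum_sum_neighborFinset_eq_two_nsmul_sum_edgeFinset {M : Type*} [AddCommMonoid M]
    (f : Sym2 V → M) :
    ∑ u, ∑ v ∈ G.neighborFinset u, f s(u, v) = 2 • ∑ e ∈ G.edgeFinset, f e := by
  calc _ = ∑ d : G.Dart, f d.edge := by
        rw [← sum_fiberwise_of_maps_to (g := fun d : G.Dart => d.fst) (t := univ) (by simp)]
        refine sum_congr rfl fun u _ => ?_
        rw [G.dart_fst_fiber u, sum_image fun _ _ _ _ h => G.dartOfNeighborSet_injective u h]
        exact (sum_subtype _ (fun v => G.mem_neighborFinset u v) _).trans rfl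
    _ = _ := by
        rw [← sum_fiberwise_of_maps_to (g := Dart.edge) (t := G.edgeFinset)
          (by simp [Dart.edge_mem]), smul_sum]
        refine sum_congr rfl fun e he => ?_
        rw [sum_congr rfl fun d hd => congrArg f (mem_filter.1 hd).2, sum_const,
          G.dart_edge_fiber_card e (G.mem_edgeFinset.1 he)]

end SimpleGraph

theorem two_mul_randic {V : Type*} [Fintype V] [DecidableEq V] (G : SimpleGraph V)
    [DecidableRel G.Adj] (α : ℝ) :
    2 * randic G α = ∑ u, ∑ v ∈ G.neighborFinset u, ((G.degree u : ℝ) * G.degree v) ^ α := by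
  have h := G.sum_sum_neighborFinset_eq_two_nsmul_sum_edgeFinset
    (Sym2.lift ⟨fun u v => ((G.degree u : ℝ) * G.degree v) ^ α, fun u v => by simp only [mul_comm]⟩)
  rw [nsmul_eq_mul, Nat.cast_ofNat] at h
  refine Eq.trans ?_ h.symm
  -- `randic` is defined with classical decidability instances; `congr!` identifies them with ours
  rw [randic]
  congr!

theorem sum_fun_fin_succ_eq_sum_snoc {α M : Type*} [Fintype α] [AddCommMonoid M] {m : ℕ}
    (f : (Fin (m + 1) → α) → M) : ∑ u, f u = ∑ w : Fin m → α, ∑ x, f (Fin.snoc w x) :=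
  (Fintype.sum_equiv (Fin.snocEquiv fun _ => α) _ f fun _ => rfl).symm.trans
    (Fintype.sum_prod_type_right _)

section Sierpinski

variable {V : Type*} (G : SimpleGraph V) {m : ℕ}

/-- `u = p a b ⋯ b` with `G.Adj a b`, where `a = u i` and the block of `b`s is nonempty. -/
def IsBridgeEnd (u : Fin (m + 1) → V) : Prop :=
  ∃ i < Fin.last m, (∀ j, i < j → u j = u (Fin.last m)) ∧ G.Adj (u i) (u (Fin.last m))

instance [DecidableEq V] [DecidableRel G.Adj] (u : Fin (m + 1) → V) :
    Decidable (IsBridgeEnd G u) := by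
  unfold IsBridgeEnd; infer_instance

variable {G} in
theorem isBridgeEnd_witness_unique {u : Fin (m + 1) → V} {i₁ i₂ : Fin (m + 1)}
    (h₁ : (∀ j, i₁ < j → u j = u (Fin.last m)) ∧ G.Adj (u i₁) (u (Fin.last m)))
    (h₂ : (∀ j, i₂ < j → u j = u (Fin.last m)) ∧ G.Adj (u i₂) (u (Fin.last m))) : i₁ = i₂ :=
  le_antisymm (not_lt.1 fun h => h₁.2.ne (h₂.1 _ h)) (not_lt.1 fun h => h₂.2.ne (h₁.1 _ h))

theorem not_isBridgeEnd_fin_one (u : Fin 1 → V) : ¬IsBridgeEnd G u := by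
  rintro ⟨i, hi, -⟩
  exact Nat.not_lt_zero _ hi

theorem isBridgeEnd_snoc (w : Fin (m + 1) → V) (x : V) :
    IsBridgeEnd G (Fin.snoc w x : Fin (m + 2) → V) ↔
      G.Adj (w (Fin.last m)) x ∨ x = w (Fin.last m) ∧ IsBridgeEnd G w := by
  constructor
  · rintro ⟨i, hi, hconst, hadj⟩
    obtain ⟨i, rfl⟩ := Fin.exists_castSucc_eq.2 hi.ne
    simp only [Fin.snoc_castSucc, Fin.snoc_last] at hconst hadj
    rcases (Fin.le_last i).lt_or_eq with hlt | rfl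
    · have hx : w (Fin.last m) = x := by
        simpa using hconst (Fin.last m).castSucc (Fin.castSucc_lt_castSucc_iff.2 hlt)
      refine Or.inr ⟨hx.symm, i, hlt, fun j hj => ?_, hx ▸ hadj⟩
      simpa [hx] using hconst j.castSucc (Fin.castSucc_lt_castSucc_iff.2 hj)
    · exact Or.inl hadj
  · rintro (hadj | ⟨rfl, i, hi, hconst, hadj⟩)
    · refine ⟨(Fin.last m).castSucc, Fin.castSucc_lt_last _, fun j hj => ?_, by simpa using hadj⟩
      cases j using Fin.lastCases with
      | last => rfl
      | cast j => exact absurd (Fin.castSucc_lt_castSucc_iff.1 hj) (Fin.le_last j).not_gt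
    · refine ⟨i.castSucc, Fin.castSucc_lt_last _, fun j hj => ?_, by simpa using hadj⟩
      cases j using Fin.lastCases with
      | last => rfl
      | cast j => simpa using hconst j (Fin.castSucc_lt_castSucc_iff.1 hj)

theorem card_filter_isBridgeEnd_snoc [Fintype V] [DecidableEq V] [DecidableRel G.Adj]
    (w : Fin (m + 1) → V) :
    #{x | IsBridgeEnd G (Fin.snoc w x : Fin (m + 2) → V)} =
      G.degree (w (Fin.last m)) + if IsBridgeEnd G w then 1 else 0 := by
  simp_rw [isBridgeEnd_snoc]
  rw [filter_or, card_union_of_disjoint, ← neighborFinset_eq_filter,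
    card_neighborFinset_eq_degree]
  · split_ifs with h <;> simp [h, filter_eq']
  · exact disjoint_filter.2 fun x _ hadj hx => G.ne_of_adj hadj hx.1.symm

theorem sierpinskiGraph_adj_snoc_snoc (w : Fin m → V) (x y : V) :
    (sierpinskiGraph G (m + 1)).Adj (Fin.snoc w x) (Fin.snoc w y) ↔ G.Adj x y := by
  constructor
  · rintro ⟨i, -, hne, hadj, -⟩
    cases i using Fin.lastCases with
    | last => simpa using hadj
    | cast i => simp at hne
  · intro h
    refine ⟨Fin.last m, fun j hj => ?_, by simpa using h.ne, by simpa using h,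
      fun j hj => absurd hj (Fin.le_last j).not_gt⟩
    cases j using Fin.lastCases with
    | last => exact absurd hj (lt_irrefl _)
    | cast j => simp

section Neighbors

variable [Fintype V] [DecidableEq V] [DecidableRel G.Adj]

theorem filter_init_eq_neighborFinset_sierpinskiGraph (u : Fin (m + 1) → V) :
    {v ∈ (sierpinskiGraph G (m + 1)).neighborFinset u | Fin.init v = Fin.init u} =
      (G.neighborFinset (u (Fin.last m))).image (Fin.snoc (Fin.init u)) := by
  ext v
  induction u using Fin.snocCases with | _ w x => ?_
  induction v using Fin.snocCases with | _ w' y => ?_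
  simp only [mem_filter, mem_neighborFinset, Fin.init_snoc, mem_image, Fin.snoc_inj,
    Fin.snoc_last]
  constructor
  · rintro ⟨h, rfl⟩
    exact ⟨y, (sierpinskiGraph_adj_snoc_snoc G _ x y).1 h, rfl, rfl⟩
  · rintro ⟨y, h, rfl, rfl⟩
    exact ⟨(sierpinskiGraph_adj_snoc_snoc G _ x y).2 h, rfl⟩

def bridgeNeighborFinset (u : Fin (m + 1) → V) : Finset (Fin (m + 1) → V) :=
  {v ∈ (sierpinskiGraph G (m + 1)).neighborFinset u | Fin.init v ≠ Fin.init u}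

variable {G} in
theorem exists_of_mem_bridgeNeighborFinset {u v : Fin (m + 1) → V}
    (hv : v ∈ bridgeNeighborFinset G u) :
    ∃ i < Fin.last m, (∀ j < i, v j = u j) ∧ v i = u (Fin.last m) ∧
      (∀ j, i < j → u j = u (Fin.last m) ∧ v j = u i) ∧ G.Adj (u i) (u (Fin.last m)) := by
  simp only [bridgeNeighborFinset, mem_filter, mem_neighborFinset] at hv
  obtain ⟨⟨i, hpre, -, hadj, hsuf⟩, hinit⟩ := hv
  have hi : i < Fin.last m := by
    refine (Fin.le_last i).lt_of_ne fun hi => hinit (funext fun j => ?_)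
    exact (hpre _ (hi ▸ Fin.castSucc_lt_last j)).symm
  have hvi : v i = u (Fin.last m) := ((hsuf _ hi).1).symm
  exact ⟨i, hi, fun j hj => (hpre j hj).symm, hvi,
    fun j hj => ⟨hvi ▸ (hsuf j hj).1, (hsuf j hj).2⟩, hvi ▸ hadj⟩

variable {G} in
theorem isBridgeEnd_of_mem_bridgeNeighborFinset {u v : Fin (m + 1) → V}
    (hv : v ∈ bridgeNeighborFinset G u) : IsBridgeEnd G u ∧ IsBridgeEnd G v := by
  obtain ⟨i, hi, -, hvi, hsuf, hadj⟩ := exists_of_mem_bridgeNeighborFinset hv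
  have hvlast : v (Fin.last m) = u i := (hsuf _ hi).2
  refine ⟨⟨i, hi, fun j hj => (hsuf j hj).1, hadj⟩, ⟨i, hi, fun j hj => ?_, ?_⟩⟩
  · rw [(hsuf j hj).2, hvlast]
  · rw [hvi, hvlast]
    exact hadj.symm

theorem card_bridgeNeighborFinset (u : Fin (m + 1) → V) :
    #(bridgeNeighborFinset G u) = if IsBridgeEnd G u then 1 else 0 := by
  split_ifs with h
  · obtain ⟨i, hi, hconst, hadj⟩ := h
    let v₀ : Fin (m + 1) → V := fun j =>
      if j < i then u j else if j = i then u (Fin.last m) else u i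
    refine card_eq_one.2 ⟨v₀, eq_singleton_iff_unique_mem.2 ⟨?_, fun v hv => ?_⟩⟩
    · have hv₀i : v₀ i = u (Fin.last m) := by simp [v₀]
      simp only [bridgeNeighborFinset, mem_filter, mem_neighborFinset]
      refine ⟨⟨i, fun j hj => by simp [v₀, hj], hv₀i ▸ hadj.ne, hv₀i ▸ hadj, fun j hj => ?_⟩, ?_⟩
      · simp [v₀, hv₀i, hconst j hj, hj.not_gt, hj.ne']
      · obtain ⟨i, rfl⟩ := Fin.exists_castSucc_eq.2 hi.ne
        exact fun h => hadj.ne (hv₀i.symm.trans (congrFun h i)).symm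
    · obtain ⟨i', -, hpre, hvi, hsuf, hadj'⟩ := exists_of_mem_bridgeNeighborFinset hv
      obtain rfl : i' = i :=
        isBridgeEnd_witness_unique ⟨fun j hj => (hsuf j hj).1, hadj'⟩ ⟨hconst, hadj⟩
      funext j
      rcases lt_trichotomy j i' with hj | rfl | hj
      · simp [v₀, hj, hpre j hj]
      · simp [v₀, hvi]
      · simp [v₀, hj.not_gt, hj.ne', (hsuf j hj).2]
  · exact card_eq_zero.2 (eq_empty_of_forall_notMem fun v hv =>
      h (isBridgeEnd_of_mem_bridgeNeighborFinset hv).1)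

theorem sum_neighborFinset_sierpinskiGraph {M : Type*} [AddCommMonoid M] (u : Fin (m + 1) → V)
    (f : (Fin (m + 1) → V) → M) :
    ∑ v ∈ (sierpinskiGraph G (m + 1)).neighborFinset u, f v =
      ∑ y ∈ G.neighborFinset (u (Fin.last m)), f (Fin.snoc (Fin.init u) y) +
        ∑ v ∈ bridgeNeighborFinset G u, f v := by
  rw [← sum_filter_add_sum_filter_not _ fun v => Fin.init v = Fin.init u,
    filter_init_eq_neighborFinset_sierpinskiGraph,
    sum_image fun _ _ _ _ h => Fin.snoc_right_injective _ h]
  rfl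

theorem degree_sierpinskiGraph (u : Fin (m + 1) → V) :
    (sierpinskiGraph G (m + 1)).degree u =
      G.degree (u (Fin.last m)) + if IsBridgeEnd G u then 1 else 0 := by
  simp only [← card_neighborFinset_eq_degree, ← card_bridgeNeighborFinset, card_eq_sum_ones]
  exact sum_neighborFinset_sierpinskiGraph G u fun _ => 1

end Neighbors

end Sierpinski

theorem psi_succ (n m : ℕ) : psi n (m + 1) = psi n m + n ^ m := sum_range_succ _ _

theorem card_isBridgeEnd_of_isRegularOfDegree {V : Type*} [Fintype V] [DecidableEq V]
    {G : SimpleGraph V} [DecidableRel G.Adj] {r : ℕ} (hG : G.IsRegularOfDegree r) (m : ℕ) :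
    #{u : Fin (m + 1) → V | IsBridgeEnd G u} = r * Fintype.card V * psi (Fintype.card V) m := by
  induction m with
  | zero => simp [not_isBridgeEnd_fin_one, psi]
  | succ m ih =>
    rw [card_filter, sum_fun_fin_succ_eq_sum_snoc]
    simp only [sum_boole, Nat.cast_id, card_filter_isBridgeEnd_snoc, hG _, sum_add_distrib, ih,
      sum_const, card_univ, Fintype.card_fun, Fintype.card_fin, smul_eq_mul, psi_succ]
    ring

section Cycle

open Fin.CommRing

variable {N m : ℕ}

theorem sum_rpow_mul_add_one (α : ℝ) (c : Fin (N + 4)) (p : Prop) [Decidable p]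
    (D : Fin (N + 4) → ℝ) (hD : ∀ x, D x = if x = c - 1 ∨ x = c + 1 ∨ x = c ∧ p then 3 else 2) :
    ∑ x, (D x * D (x + 1)) ^ α = N * 4 ^ α + 2 * 6 ^ α + 2 * (if p then 9 else 6 : ℝ) ^ α := by
  have h1 : (1 : Fin (N + 4)) ≠ 0 := one_ne_zero
  have h2 : (2 : Fin (N + 4)) ≠ 0 := by simp (disch := omega) [Fin.ext_iff, Nat.mod_eq_of_lt]
  have h3 : (3 : Fin (N + 4)) ≠ 0 := by simp (disch := omega) [Fin.ext_iff, Nat.mod_eq_of_lt]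
  have e₁ : c - 2 ≠ c - 1 := fun h => h1 (by linear_combination -h)
  have e₂ : c - 2 ≠ c := fun h => h2 (by linear_combination -h)
  have e₃ : c - 2 ≠ c + 1 := fun h => h3 (by linear_combination -h)
  have e₄ : c - 1 ≠ c := fun h => h1 (by linear_combination -h)
  have e₅ : c - 1 ≠ c + 1 := fun h => h2 (by linear_combination -h)
  have e₆ : c ≠ c + 1 := fun h => h1 (by linear_combination -h)
  have e₇ : c + 2 ≠ c - 1 := fun h => h3 (by linear_combination h)
  have e₈ : c + 2 ≠ c + 1 := fun h => h1 (by linear_combination h)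
  have e₉ : c + 2 ≠ c := fun h => h2 (by linear_combination h)
  have hD2 : ∀ x, x ≠ c - 1 → x ≠ c + 1 → x ≠ c → D x = 2 := fun x h₁ h₂ h₃ => by
    simp [hD, h₁, h₂, h₃]
  -- only the four edges meeting `{c - 1, c, c + 1}` carry a weight other than `4 ^ α`
  set T : Finset (Fin (N + 4)) := {c - 2, c - 1, c, c + 1}
  have hcard : #T = 4 := by
    rw [card_insert_of_notMem (by simp [e₁, e₂, e₃]), card_insert_of_notMem (by simp [e₄, e₅]),
      card_pair e₆]
  have hT : ∑ x ∈ T, (D x * D (x + 1)) ^ α = 2 * 6 ^ α + 2 * (if p then 9 else 6 : ℝ) ^ α := by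
    rw [sum_insert (by simp [e₁, e₂, e₃]), sum_insert (by simp [e₄, e₅]), sum_pair e₆,
      show c - 2 + 1 = c - 1 by ring, show c - 1 + 1 = c by ring, show c + 1 + 1 = c + 2 by ring,
      hD2 _ e₁ e₃ e₂, hD2 _ e₇ e₈ e₉, hD (c - 1), hD (c + 1), hD c]
    simp only [true_or, or_true, if_true, e₄.symm, e₆, false_or, true_and]
    split_ifs <;> norm_num <;> ring
  have hTc : ∀ x ∈ Tᶜ, (D x * D (x + 1)) ^ α = 4 ^ α := by
    intro x hx
    simp only [T, mem_compl, mem_insert, mem_singleton, not_or] at hx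
    obtain ⟨hx₁, hx₂, hx₃, hx₄⟩ := hx
    rw [hD2 x hx₂ hx₄ hx₃, hD2 (x + 1) (fun h => hx₁ (by linear_combination h))
      (fun h => hx₃ (by linear_combination h)) (fun h => hx₂ (by linear_combination h))]
    norm_num
  rw [← sum_add_sum_compl T, hT, sum_congr rfl hTc, sum_const, card_compl, hcard,
    Fintype.card_fin, Nat.add_sub_cancel, nsmul_eq_mul]
  ring

theorem isBridgeEnd_snoc_cycleGraph (w : Fin (m + 1) → Fin (N + 4)) (x : Fin (N + 4)) :
    IsBridgeEnd (cycleGraph (N + 4)) (Fin.snoc w x : Fin (m + 2) → Fin (N + 4)) ↔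
      x = w (Fin.last m) - 1 ∨ x = w (Fin.last m) + 1 ∨
        x = w (Fin.last m) ∧ IsBridgeEnd (cycleGraph (N + 4)) w := by
  rw [isBridgeEnd_snoc, ← mem_neighborFinset, cycleGraph_neighborFinset (n := N + 2), mem_insert,
    mem_singleton, or_assoc]

theorem degree_sierpinskiGraph_cycleGraph (u : Fin (m + 1) → Fin (N + 4)) :
    ((sierpinskiGraph (cycleGraph (N + 4)) (m + 1)).degree u : ℝ) =
      if IsBridgeEnd (cycleGraph (N + 4)) u then 3 else 2 := by
  rw [degree_sierpinskiGraph, cycleGraph_degree_three_le (n := N + 1)]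
  split_ifs <;> norm_num

theorem sum_bridgeNeighborFinset_cycleGraph (α : ℝ) (u : Fin (m + 1) → Fin (N + 4)) :
    ∑ v ∈ bridgeNeighborFinset (cycleGraph (N + 4)) u,
        (((sierpinskiGraph (cycleGraph (N + 4)) (m + 1)).degree u : ℝ) *
          (sierpinskiGraph (cycleGraph (N + 4)) (m + 1)).degree v) ^ α =
      if IsBridgeEnd (cycleGraph (N + 4)) u then 9 ^ α else 0 := by
  have h9 : ∀ v ∈ bridgeNeighborFinset (cycleGraph (N + 4)) u,
      (((sierpinskiGraph (cycleGraph (N + 4)) (m + 1)).degree u : ℝ) *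
        (sierpinskiGraph (cycleGraph (N + 4)) (m + 1)).degree v) ^ α = 9 ^ α := fun v hv => by
    obtain ⟨hu, hv⟩ := isBridgeEnd_of_mem_bridgeNeighborFinset hv
    rw [degree_sierpinskiGraph_cycleGraph, degree_sierpinskiGraph_cycleGraph, if_pos hu, if_pos hv]
    norm_num
  rw [sum_congr rfl h9, sum_const, card_bridgeNeighborFinset]
  split_ifs <;> simp

theorem sum_sum_neighborFinset_snoc_cycleGraph (α : ℝ) (w : Fin (m + 1) → Fin (N + 4)) :
    ∑ x, ∑ v ∈ (sierpinskiGraph (cycleGraph (N + 4)) (m + 2)).neighborFinset (Fin.snoc w x),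
        (((sierpinskiGraph (cycleGraph (N + 4)) (m + 2)).degree (Fin.snoc w x) : ℝ) *
          (sierpinskiGraph (cycleGraph (N + 4)) (m + 2)).degree v) ^ α =
      2 * N * 4 ^ α + 8 * 6 ^ α + 2 * 9 ^ α +
        if IsBridgeEnd (cycleGraph (N + 4)) w then 5 * 9 ^ α - 4 * 6 ^ α else 0 := by
  set S := sierpinskiGraph (cycleGraph (N + 4)) (m + 2)
  set c := w (Fin.last m)
  set D : Fin (N + 4) → ℝ := fun x => S.degree (Fin.snoc w x)
  have hD : ∀ x,
      D x = if x = c - 1 ∨ x = c + 1 ∨ x = c ∧ IsBridgeEnd (cycleGraph (N + 4)) w then 3 else 2 :=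
    fun x => (degree_sierpinskiGraph_cycleGraph _).trans
      (if_congr (isBridgeEnd_snoc_cycleGraph w x) rfl rfl)
  have hinner (x : Fin (N + 4)) :
      ∑ v ∈ S.neighborFinset (Fin.snoc w x), (D x * S.degree v) ^ α =
        (D x * D (x - 1)) ^ α + (D x * D (x + 1)) ^ α +
          if IsBridgeEnd (cycleGraph (N + 4)) (Fin.snoc w x : Fin (m + 2) → Fin (N + 4))
          then 9 ^ α else 0 := by
    have h2 : (2 : Fin (N + 4)) ≠ 0 := by simp (disch := omega) [Fin.ext_iff, Nat.mod_eq_of_lt]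
    rw [sum_neighborFinset_sierpinskiGraph, sum_bridgeNeighborFinset_cycleGraph, Fin.init_snoc, Fin.snoc_last,
      cycleGraph_neighborFinset (n := N + 2), sum_pair fun h => h2 (by linear_combination -h)]
  have hshift : ∑ x, (D x * D (x - 1)) ^ α = ∑ x, (D x * D (x + 1)) ^ α :=
    Fintype.sum_equiv (Equiv.subRight 1) _ _ fun x => by simp [mul_comm]
  refine (sum_congr rfl fun x _ => hinner x).trans ?_
  simp only [sum_add_distrib, hshift, sum_rpow_mul_add_one α c _ D hD, sum_ite, sum_const_zero,
    sum_const, card_filter_isBridgeEnd_snoc, cycleGraph_degree_three_le]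
  split_ifs <;> norm_num <;> ring

end Cycle

theorem randic_sierpinski_cycle {n t : ℕ} (hn : 4 ≤ n) (ht : 2 ≤ t) (α : ℝ) :
    randic (sierpinskiGraph (SimpleGraph.cycleGraph n) t) α =
      (4 : ℝ) ^ α * (n : ℝ) ^ (t - 1) * ((n : ℝ) - 4) +
        4 * (6 : ℝ) ^ α * ((n : ℝ) ^ (t - 1) - (n : ℝ) * (psi n (t - 2) : ℝ)) +
        (9 : ℝ) ^ α * (n : ℝ) * ((psi n (t - 1) : ℝ) + 4 * (psi n (t - 2) : ℝ)) := by
  obtain ⟨N, rfl⟩ : ∃ N, n = N + 4 := ⟨n - 4, by omega⟩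
  obtain ⟨k, rfl⟩ : ∃ k, t = k + 2 := ⟨t - 2, by omega⟩
  have h2R := two_mul_randic (sierpinskiGraph (cycleGraph (N + 4)) (k + 2)) α
  rw [sum_fun_fin_succ_eq_sum_snoc] at h2R
  simp only [sum_sum_neighborFinset_snoc_cycleGraph, sum_add_distrib, sum_const, sum_ite,
    card_univ, Fintype.card_fun, Fintype.card_fin, nsmul_eq_mul,
    card_isBridgeEnd_of_isRegularOfDegree fun _ => cycleGraph_degree_three_le] at h2R
  rw [show k + 2 - 1 = k + 1 by omega, show k + 2 - 2 = k by omega, psi_succ]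
  push_cast at h2R ⊢
  linear_combination h2R / 2
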